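/- arXiv:2002.10055 — 4 statements merged into one kernel-verified Lean document; each statement's English description precedes it below -/
import Mathlib

section
/- Let n ≥ 1, let M ∈ ℝ^{n×n} be a row-stochastic matrix, let K ⊆ {1,…,n} be a nonempty proper subset of 'secret' states with indicator vector s ∈ {0,1}ⁿ, and let ε > 0. Then the following are equivalent: (i) for every probability vector b₀ ∈ Δⁿ with b₀(K) ≤ ε, the beliefs b_t = (Mᵀ)^t b₀ satisfy b_t(K) ≤ ε for all t ≥ 0; (ii) there exist a scalar z ≥ 0 and a vector β ∈ ℝⁿ with β ≥ 0 componentwise such that for every index j, −ε·z + z·s(j) − Σ_{i∈K} M(j,i) − β(j) ≥ −ε (equivalently, Σ_{i∈K} M(j,i) ≤ ε(1−z) + z·s(j) for every j). -/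
/-!
If `z ≥ 0` satisfies `∑_{i ∈ K} M j i ≤ ε (1 - z) + z s j` for every `j`, then one step of the chain
sends a belief `b` with `b(K) ≤ ε` to one with mass at most `ε (1 - z) + z b(K) ≤ ε` on `K`, so the
set of such beliefs is invariant. Conversely, only the first step is needed: with `α` the largest
one-step inflow into `K` from a state outside `K` (or `0`), the point masses outside `K` give
`α ≤ ε`, and the beliefs `ε δ_j + (1 - ε) δ_k` with `j ∈ K`, `k ∉ K` give exactly the inequality
that makes `z = 1 - α / ε` a certificate.
-/

open Matrix BigOperators

/-- A probability vector: nonnegative entries summing to 1. -/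
def IsProbVec {n : ℕ} (b : Fin n → ℝ) : Prop :=
  (∀ i, 0 ≤ b i) ∧ ∑ i, b i = 1

/-- A row-stochastic matrix: nonnegative entries, each row sums to 1. -/
def RowStochastic {n : ℕ} (M : Matrix (Fin n) (Fin n) ℝ) : Prop :=
  (∀ i j, 0 ≤ M i j) ∧ ∀ i, ∑ j, M i j = 1

theorem Matrix.sum_transpose_mulVec_eq {ι R : Type*} [Fintype ι] [CommSemiring R]
    (M : Matrix ι ι R) (b : ι → R) (K : Finset ι) :
    ∑ i ∈ K, (Mᵀ *ᵥ b) i = ∑ j, b j * ∑ i ∈ K, M j i := by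
  simp only [mulVec, dotProduct, transpose_apply, Finset.mul_sum]
  rw [Finset.sum_comm]
  exact Finset.sum_congr rfl fun j _ => Finset.sum_congr rfl fun i _ => mul_comm _ _

theorem Matrix.pow_mulVec_mem {ι R : Type*} [Fintype ι] [DecidableEq ι] [CommSemiring R]
    {A : Matrix ι ι R} {S : Set (ι → R)} (hS : ∀ b ∈ S, A *ᵥ b ∈ S) {b : ι → R} (hb : b ∈ S)
    (t : ℕ) : (A ^ t) *ᵥ b ∈ S := by
  induction t with
  | zero => simpa using hb
  | succ t ih => simpa [pow_succ', ← mulVec_mulVec] using hS _ ih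

section

variable {n : ℕ}

theorem isProbVec_single (k : Fin n) : IsProbVec (Pi.single k 1) :=
  ⟨fun i => by by_cases h : i = k <;> simp [h], by simp⟩

theorem isProbVec_single_add_single {j k : Fin n} (hjk : j ≠ k) {a : ℝ} (ha₀ : 0 ≤ a)
    (ha₁ : a ≤ 1) : IsProbVec (Pi.single j a + Pi.single k (1 - a)) := by
  refine ⟨fun i => ?_, by simp [Finset.sum_add_distrib]⟩
  by_cases hij : i = j <;> by_cases hik : i = k <;> simp [hij, hik, hjk] <;> linarith

theorem RowStochastic.isProbVec_transpose_mulVec {M : Matrix (Fin n) (Fin n) ℝ}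
    (hM : RowStochastic M) {b : Fin n → ℝ} (hb : IsProbVec b) : IsProbVec (Mᵀ *ᵥ b) := by
  refine ⟨fun i => ?_, by simp [Matrix.sum_transpose_mulVec_eq, hM.2, hb.2]⟩
  simp only [mulVec, dotProduct, transpose_apply]
  exact Finset.sum_nonneg fun j _ => mul_nonneg (hM.1 j i) (hb.1 j)

theorem RowStochastic.sum_le_one {M : Matrix (Fin n) (Fin n) ℝ} (hM : RowStochastic M)
    (K : Finset (Fin n)) (j : Fin n) : ∑ i ∈ K, M j i ≤ 1 :=
  hM.2 j ▸ Finset.sum_le_sum_of_subset_of_nonneg K.subset_univ fun i _ _ => hM.1 j i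

variable {K : Finset (Fin n)} {ε : ℝ}

theorem IsProbVec.sum_mul_le_of_certificate {b c : Fin n → ℝ} (hb : IsProbVec b)
    (hbK : ∑ i ∈ K, b i ≤ ε) {z : ℝ} (hz : 0 ≤ z)
    (hc : ∀ j, c j ≤ ε * (1 - z) + z * if j ∈ K then 1 else 0) :
    ∑ j, b j * c j ≤ ε :=
  calc ∑ j, b j * c j ≤ ∑ j, b j * (ε * (1 - z) + z * if j ∈ K then 1 else 0) :=
        Finset.sum_le_sum fun j _ => mul_le_mul_of_nonneg_left (hc j) (hb.1 j)
    _ = ε * (1 - z) + z * ∑ i ∈ K, b i := by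
        simp [mul_add, Finset.sum_add_distrib, ← Finset.sum_mul, hb.2, Finset.mul_sum, mul_comm]
    _ ≤ ε * (1 - z) + z * ε := by gcongr
    _ = ε := by ring

theorem exists_threshold_of_forall_isProbVec {c : Fin n → ℝ} (hc : ∀ j, c j ≤ 1) (hε : 0 ≤ ε)
    (h : ∀ b, IsProbVec b → ∑ i ∈ K, b i ≤ ε → ∑ j, b j * c j ≤ ε) :
    ∃ α, α ≤ ε ∧ (∀ k ∉ K, c k ≤ α) ∧ ∀ j ∈ K, ε * c j + (1 - ε) * α ≤ ε := by
  set T := insert 0 ((Kᶜ).image c)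
  have hT : T.Nonempty := Finset.insert_nonempty _ _
  have hα₀ : 0 ≤ T.max' hT := T.le_max' 0 (Finset.mem_insert_self _ _)
  have hαc : ∀ k ∉ K, c k ≤ T.max' hT := fun k hk =>
    T.le_max' _ (Finset.mem_insert_of_mem (Finset.mem_image_of_mem c (Finset.mem_compl.2 hk)))
  have hcases : T.max' hT = 0 ∨ ∃ k ∉ K, c k = T.max' hT := by
    simpa [T, eq_comm] using T.max'_mem hT
  refine ⟨T.max' hT, ?_, hαc, fun j hj => ?_⟩
  · rcases hcases with h0 | ⟨k, hk, hkα⟩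
    · exact h0 ▸ hε
    · simpa [← hkα, Pi.single_apply, hk, hε] using h _ (isProbVec_single k)
  · by_cases hε₁ : 1 ≤ ε
    · nlinarith [hc j]
    rcases hcases with h0 | ⟨k, hk, hkα⟩
    · rw [h0]; nlinarith [hc j]
    · have hjk : j ≠ k := fun h => hk (h ▸ hj)
      simpa [← hkα, Finset.sum_add_distrib, add_mul, Pi.single_apply, hj, hk, hjk] using
        h _ (isProbVec_single_add_single hjk hε (by linarith))

theorem exists_certificate_of_forall_isProbVec {c : Fin n → ℝ} (hc : ∀ j, c j ≤ 1)
    (hε : 0 < ε) (h : ∀ b, IsProbVec b → ∑ i ∈ K, b i ≤ ε → ∑ j, b j * c j ≤ ε) :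
    ∃ z, 0 ≤ z ∧ ∀ j, c j ≤ ε * (1 - z) + z * if j ∈ K then 1 else 0 := by
  obtain ⟨α, hαε, hout, hin⟩ := exists_threshold_of_forall_isProbVec hc hε.le h
  have hεz : ε * (1 - (1 - α / ε)) = α := by field_simp; ring
  refine ⟨1 - α / ε, by rw [sub_nonneg, div_le_one hε]; exact hαε, fun j => ?_⟩
  by_cases hj : j ∈ K
  · have key : ε * c j ≤ ε * (α + (1 - α / ε)) := by
      rw [mul_add, mul_sub, mul_div_cancel₀ _ hε.ne']; linarith [hin j hj]
    simpa only [hj, if_true, mul_one, hεz] using le_of_mul_le_mul_left key hε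
  · simpa only [hj, if_false, mul_zero, add_zero, hεz] using hout j hj

end

theorem eps_privacy_iff_dual_certificate_general
    {n : ℕ} (M : Matrix (Fin n) (Fin n) ℝ) (hM : RowStochastic M)
    (K : Finset (Fin n))
    (ε : ℝ) (hε : 0 < ε)
    (s : Fin n → ℝ) (hs : ∀ j, s j = if j ∈ K then 1 else 0) :
    (∀ b₀ : Fin n → ℝ, IsProbVec b₀ → ∑ i ∈ K, b₀ i ≤ ε →
      ∀ t : ℕ, ∑ i ∈ K, ((Mᵀ ^ t) *ᵥ b₀) i ≤ ε) ↔
    (∃ (z : ℝ) (β : Fin n → ℝ), 0 ≤ z ∧ (∀ j, 0 ≤ β j) ∧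
      ∀ j, -ε * z + z * s j - (∑ i ∈ K, M j i) - β j ≥ -ε) := by
  obtain rfl : s = fun j => if j ∈ K then 1 else 0 := funext hs
  have slack : (∃ (z : ℝ) (β : Fin n → ℝ), 0 ≤ z ∧ (∀ j, 0 ≤ β j) ∧
      ∀ j, -ε * z + z * (if j ∈ K then 1 else 0) - (∑ i ∈ K, M j i) - β j ≥ -ε) ↔
      ∃ z, 0 ≤ z ∧ ∀ j, ∑ i ∈ K, M j i ≤ ε * (1 - z) + z * if j ∈ K then 1 else 0 := by
    constructor
    · rintro ⟨z, β, hz, hβ, h⟩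
      exact ⟨z, hz, fun j => by linarith [h j, hβ j]⟩
    · rintro ⟨z, hz, h⟩
      exact ⟨z, _, hz, fun j => sub_nonneg.2 (h j), fun j => by linarith⟩
  rw [slack]
  constructor
  · intro h
    refine exists_certificate_of_forall_isProbVec (hM.sum_le_one K) hε fun b hb hbK => ?_
    simpa [Matrix.sum_transpose_mulVec_eq] using h b hb hbK 1
  · rintro ⟨z, hz, hc⟩ b₀ hb₀ hb₀K t
    refine (Matrix.pow_mulVec_mem (S := {b | IsProbVec b ∧ ∑ i ∈ K, b i ≤ ε}) ?_ ⟨hb₀, hb₀K⟩ t).2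
    rintro b ⟨hb, hbK⟩
    exact ⟨hM.isProbVec_transpose_mulVec hb, Matrix.sum_transpose_mulVec_eq M b K ▸
      hb.sum_mul_le_of_certificate hbK hz hc⟩

theorem eps_privacy_iff_dual_certificate
    {n : ℕ} (hn : 1 ≤ n) (M : Matrix (Fin n) (Fin n) ℝ) (hM : RowStochastic M)
    (K : Finset (Fin n)) (hKne : K.Nonempty) (hKproper : K ≠ Finset.univ)
    (ε : ℝ) (hε : 0 < ε)
    (s : Fin n → ℝ) (hs : ∀ j, s j = if j ∈ K then 1 else 0) :
    (∀ b₀ : Fin n → ℝ, IsProbVec b₀ → ∑ i ∈ K, b₀ i ≤ ε →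
      ∀ t : ℕ, ∑ i ∈ K, ((Mᵀ ^ t) *ᵥ b₀) i ≤ ε) ↔
    (∃ (z : ℝ) (β : Fin n → ℝ), 0 ≤ z ∧ (∀ j, 0 ≤ β j) ∧
      ∀ j, -ε * z + z * s j - (∑ i ∈ K, M j i) - β j ≥ -ε) :=
  eps_privacy_iff_dual_certificate_general M hM K ε hε s hs
end

section
/- Let M ∈ ℝ^{n×n} be a row-stochastic matrix, K ⊆ {1,…,n} a set of secret states with indicator vector s ∈ {0,1}ⁿ, and ε > 0. If there exist z ≥ 0 and β ∈ ℝⁿ with β ≥ 0 componentwise such that for every index j, −ε·z + z·s(j) − Σ_{i∈K} M(j,i) − β(j) ≥ −ε, then for every probability vector b₀ ∈ Δⁿ with b₀(K) ≤ ε and every t ≥ 0, the belief b_t = (Mᵀ)^t b₀ satisfies b_t(K) ≤ ε. -/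
open Matrix BigOperators

theorem dual_certificate_implies_eps_privacy
    {n : ℕ} (M : Matrix (Fin n) (Fin n) ℝ) (hM : RowStochastic M)
    (K : Finset (Fin n)) (ε : ℝ) (hε : 0 < ε)
    (s : Fin n → ℝ) (hs : ∀ j, s j = if j ∈ K then 1 else 0)
    (z : ℝ) (β : Fin n → ℝ) (hz : 0 ≤ z) (hβ : ∀ j, 0 ≤ β j)
    (hcert : ∀ j, -ε * z + z * s j - (∑ i ∈ K, M j i) - β j ≥ -ε) :
    ∀ b₀ : Fin n → ℝ, IsProbVec b₀ → ∑ i ∈ K, b₀ i ≤ ε →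
      ∀ t : ℕ, ∑ i ∈ K, ((Mᵀ ^ t) *ᵥ b₀) i ≤ ε := by
  intro b₀ hb₀ hK0 t
  -- strengthen: for all t, the belief is a prob vec and satisfies the bound
  suffices h : ∀ t : ℕ, IsProbVec ((Mᵀ ^ t) *ᵥ b₀) ∧ ∑ i ∈ K, ((Mᵀ ^ t) *ᵥ b₀) i ≤ ε from
    (h t).2
  intro t
  induction t with
  | zero =>
    simpa using ⟨hb₀, hK0⟩
  | succ t ih =>
    obtain ⟨⟨hpos, hsum⟩, hKt⟩ := ih
    set b : Fin n → ℝ := (Mᵀ ^ t) *ᵥ b₀ with hb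
    have hstep : (Mᵀ ^ (t + 1)) *ᵥ b₀ = Mᵀ *ᵥ b := by
      rw [pow_succ', ← Matrix.mulVec_mulVec]
    rw [hstep]
    have hentry : ∀ i, (Mᵀ *ᵥ b) i = ∑ j, M j i * b j := by
      intro i
      simp [Matrix.mulVec, dotProduct, Matrix.transpose_apply]
    constructor
    · constructor
      · intro i
        rw [hentry]
        exact Finset.sum_nonneg fun j _ => mul_nonneg (hM.1 j i) (hpos j)
      · calc ∑ i, (Mᵀ *ᵥ b) i = ∑ i, ∑ j, M j i * b j := by
              simp [hentry]
          _ = ∑ j, (∑ i, M j i) * b j := by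
              rw [Finset.sum_comm]; simp [Finset.sum_mul]
          _ = ∑ j, b j := by simp [hM.2]
          _ = 1 := hsum
    · have hrow : ∀ j, ∑ i ∈ K, M j i ≤ ε - ε * z + z * s j := by
        intro j
        have := hcert j
        have hbj := hβ j
        linarith
      have hsK : ∑ j, b j * s j = ∑ j ∈ K, b j := by
        rw [← Finset.sum_filter_add_sum_filter_not Finset.univ (· ∈ K) (fun j => b j * s j)]
        have h1 : ∀ j ∈ Finset.univ.filter (· ∈ K), b j * s j = b j := by
          intro j hj
          simp only [Finset.mem_filter] at hj
          simp [hs j, hj.2]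
        have h2 : ∀ j ∈ Finset.univ.filter (¬ · ∈ K), b j * s j = 0 := by
          intro j hj
          simp only [Finset.mem_filter] at hj
          simp [hs j, hj.2]
        rw [Finset.sum_congr rfl h1, Finset.sum_congr rfl h2]
        simp
      calc ∑ i ∈ K, (Mᵀ *ᵥ b) i = ∑ i ∈ K, ∑ j, M j i * b j := by
            simp [hentry]
        _ = ∑ j, b j * ∑ i ∈ K, M j i := by
            rw [Finset.sum_comm]
            congr 1; ext j
            rw [Finset.mul_sum]
            congr 1; ext i; ring
        _ ≤ ∑ j, b j * (ε - ε * z + z * s j) := by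
            apply Finset.sum_le_sum
            intro j _
            exact mul_le_mul_of_nonneg_left (hrow j) (hpos j)
        _ = (ε - ε * z) * ∑ j, b j + z * ∑ j, b j * s j := by
            rw [Finset.mul_sum, Finset.mul_sum, ← Finset.sum_add_distrib]
            congr 1; ext j; ring
        _ = ε - ε * z + z * ∑ j ∈ K, b j := by rw [hsum, hsK]; ring
        _ ≤ ε - ε * z + z * ε := by nlinarith
        _ = ε := by ring
end

section
/- Let M ∈ ℝ^{n×n} be a row-stochastic matrix, K ⊆ {1,…,n} a proper subset of secret states with indicator vector s ∈ {0,1}ⁿ, and ε > 0. If every probability vector b ∈ Δⁿ with b(K) ≤ ε satisfies (Mᵀ b)(K) ≤ ε, then there exist z ≥ 0 and β ∈ ℝⁿ with β ≥ 0 componentwise such that for every index j, −ε·z + z·s(j) − Σ_{i∈K} M(j,i) − β(j) ≥ −ε. -/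
open Matrix BigOperators

theorem one_step_invariance_implies_dual_certificate
    {n : ℕ} (M : Matrix (Fin n) (Fin n) ℝ) (hM : RowStochastic M)
    (K : Finset (Fin n)) (hKproper : K ≠ Finset.univ)
    (ε : ℝ) (hε : 0 < ε)
    (s : Fin n → ℝ) (hs : ∀ j, s j = if j ∈ K then 1 else 0)
    (hinv : ∀ b : Fin n → ℝ, IsProbVec b → ∑ i ∈ K, b i ≤ ε →
      ∑ i ∈ K, (Mᵀ *ᵥ b) i ≤ ε) :
    ∃ (z : ℝ) (β : Fin n → ℝ), 0 ≤ z ∧ (∀ j, 0 ≤ β j) ∧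
      ∀ j, -ε * z + z * s j - (∑ i ∈ K, M j i) - β j ≥ -ε := by
  obtain ⟨hMpos, hMrow⟩ := hM
  set f : Fin n → ℝ := fun j => ∑ i ∈ K, M j i with hf
  -- Kᶜ is nonempty
  have hne : (Kᶜ : Finset (Fin n)).Nonempty := by
    by_contra h
    rw [Finset.not_nonempty_iff_eq_empty] at h
    apply hKproper
    apply Finset.eq_univ_iff_forall.mpr
    intro x
    by_contra hx
    have : x ∈ Kᶜ := Finset.mem_compl.mpr hx
    simp [h] at this
  -- S = max over k ∉ K of f k
  set S : ℝ := (Kᶜ : Finset (Fin n)).sup' hne f with hS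
  obtain ⟨k, hkmem, hkval⟩ := Finset.exists_mem_eq_sup' hne f
  have hkK : k ∉ K := Finset.mem_compl.mp hkmem
  have hf_nonneg : ∀ j, 0 ≤ f j := fun j => Finset.sum_nonneg fun i _ => hMpos j i
  have hf_le_one : ∀ j, f j ≤ 1 := by
    intro j
    rw [← hMrow j]
    exact Finset.sum_le_sum_of_subset_of_nonneg (Finset.subset_univ K)
      (fun i _ _ => hMpos j i)
  have hfkS : f k = S := by rw [hS, hkval]
  have hS_nonneg : 0 ≤ S := hfkS ▸ hf_nonneg k
  -- key computation: transpose mulVec applied to combinations of Diracs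
  have hmv : ∀ (b : Fin n → ℝ) (i : Fin n), (Mᵀ *ᵥ b) i = ∑ x, M x i * b x := by
    intro b i
    simp [Matrix.mulVec, Matrix.transpose, dotProduct]
  -- S ≤ ε : use the Dirac at k
  have hSε : S ≤ ε := by
    have h1 : IsProbVec (fun x => if x = k then (1:ℝ) else 0) := by
      constructor
      · intro i; positivity
      · simp
    have h2 : ∑ i ∈ K, (fun x => if x = k then (1:ℝ) else 0) i ≤ ε := by
      simp [Finset.sum_ite_eq' K k (fun _ => (1:ℝ)), hkK]
      exact le_of_lt hε
    have h3 := hinv _ h1 h2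
    have h4 : ∑ i ∈ K, (Mᵀ *ᵥ fun x => if x = k then (1:ℝ) else 0) i = f k := by
      apply Finset.sum_congr rfl
      intro i _
      rw [hmv]
      simp [mul_ite]
    rw [h4] at h3
    rw [← hfkS]
    exact h3
  refine ⟨1 - S / ε, fun _ => 0, ?_, fun _ => le_refl 0, ?_⟩
  · have : S / ε ≤ 1 := (div_le_one hε).mpr hSε
    linarith
  intro j
  rw [hs j]
  by_cases hjK : j ∈ K
  · simp only [hjK, if_pos, sub_zero]
    -- need : -ε*(1-S/ε) + (1-S/ε)*1 - f j ≥ -ε, i.e. f j ≤ 1 + S - S/ε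
    have key : f j ≤ 1 + S - S / ε := by
      rcases le_or_gt 1 ε with hε1 | hε1
      · have h1 : S / ε ≤ S := by
          rcases eq_or_lt_of_le hS_nonneg with h | h
          · rw [← h]; simp
          · exact div_le_self hS_nonneg hε1
        have := hf_le_one j
        linarith
      · -- mixed vector : ε at j, (1-ε) at k
        have hjk : j ≠ k := fun h => hkK (h ▸ hjK)
        set b : Fin n → ℝ := fun x =>
          ε * (if x = j then 1 else 0) + (1 - ε) * (if x = k then 1 else 0) with hb
        have h1 : IsProbVec b := by
          constructor
          · intro i
            rw [hb]
            have : (0:ℝ) ≤ 1 - ε := by linarith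
            positivity
          · rw [hb]
            rw [Finset.sum_add_distrib]
            rw [← Finset.mul_sum, ← Finset.mul_sum]
            simp
        have h2 : ∑ i ∈ K, b i ≤ ε := by
          rw [hb]
          rw [Finset.sum_add_distrib, ← Finset.mul_sum, ← Finset.mul_sum]
          rw [Finset.sum_ite_eq' K j (fun _ => (1:ℝ)), Finset.sum_ite_eq' K k (fun _ => (1:ℝ))]
          simp [hjK, hkK]
        have h3 := hinv _ h1 h2
        have h4 : ∑ i ∈ K, (Mᵀ *ᵥ b) i = ε * f j + (1 - ε) * f k := by
          have : ∀ i, (Mᵀ *ᵥ b) i = ε * M j i + (1 - ε) * M k i := by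
            intro i
            rw [hmv, hb]
            have expand : ∀ x, M x i * (ε * (if x = j then (1:ℝ) else 0)
                + (1 - ε) * (if x = k then 1 else 0))
                = ε * (if x = j then M x i else 0) + (1 - ε) * (if x = k then M x i else 0) := by
              intro x
              by_cases h1 : x = j
              · subst h1; simp [hjk]; ring
              · by_cases h2 : x = k
                · subst h2; simp [Ne.symm hjk, h1]; ring
                · simp [h1, h2]
            rw [Finset.sum_congr rfl fun x _ => expand x]
            rw [Finset.sum_add_distrib, ← Finset.mul_sum, ← Finset.mul_sum]
            simp
          rw [Finset.sum_congr rfl fun i _ => this i]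
          rw [Finset.sum_add_distrib, ← Finset.mul_sum, ← Finset.mul_sum, hf]
        rw [h4, hfkS] at h3
        -- ε * f j + (1-ε) * S ≤ ε  ⇒  f j ≤ 1 + S - S/ε
        have h5 : f j ≤ (ε - (1 - ε) * S) / ε := by
          rw [le_div_iff₀ hε]
          linarith [mul_comm (f j) ε]
        have h6 : (ε - (1 - ε) * S) / ε = 1 + S - S / ε := by
          field_simp
          ring
        linarith [h6 ▸ h5]
    have hSεdiv : ε * (S / ε) = S := by field_simp
    nlinarith [key]
  · simp only [hjK, if_neg, not_false_iff, sub_zero]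
    have hfS : f j ≤ S := by
      rw [hS]; exact Finset.le_sup' f (Finset.mem_compl.mpr hjK)
    have hSεdiv : ε * (S / ε) = S := by field_simp
    nlinarith [hfS]
end

section
/- Let a ∈ {0,1}ⁿ be the indicator vector of a proper subset K ⊊ {1,…,n}, let c ∈ ℝⁿ be arbitrary, and let ε > 0. Then every probability vector b ∈ Δⁿ with ⟨a,b⟩ ≤ ε satisfies ⟨c,b⟩ ≤ ε if and only if there exists z ≥ 0 such that c(j) ≤ ε(1−z) + z·a(j) for every index j. -/
open BigOperators

lemma sum_one_pt {n : ℕ} (f : Fin n → ℝ) (j : Fin n) (x : ℝ) :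
    ∑ i, f i * (if i = j then x else 0) = f j * x := by
  rw [Finset.sum_eq_single j] <;> simp +contextual

lemma sum_two_pt {n : ℕ} (f : Fin n → ℝ) (j k : Fin n) (hjk : j ≠ k) (x y : ℝ) :
    ∑ i, f i * (if i = j then x else if i = k then y else 0) = f j * x + f k * y := by
  have : ∀ i : Fin n, f i * (if i = j then x else if i = k then y else 0) =
      (if i = j then f j * x else 0) + (if i = k then f k * y else 0) := by
    intro i
    by_cases h1 : i = j <;> by_cases h2 : i = k <;> simp_all
  rw [Finset.sum_congr rfl (fun i _ => this i), Finset.sum_add_distrib]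
  simp

theorem indicator_lp_duality_core
    {n : ℕ} (K : Finset (Fin n)) (hKproper : K ≠ Finset.univ)
    (a : Fin n → ℝ) (ha : ∀ j, a j = if j ∈ K then 1 else 0)
    (c : Fin n → ℝ) (ε : ℝ) (hε : 0 < ε) :
    (∀ b : Fin n → ℝ, IsProbVec b → ∑ j, a j * b j ≤ ε → ∑ j, c j * b j ≤ ε) ↔
    (∃ z : ℝ, 0 ≤ z ∧ ∀ j, c j ≤ ε * (1 - z) + z * a j) := by
  constructor
  · intro h
    -- single-point test: for j ∉ K, c j ≤ ε
    have hout : ∀ j, j ∉ K → c j ≤ ε := by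
      intro j hj
      have hb : IsProbVec (fun i => if i = j then (1:ℝ) else 0) := by
        constructor
        · intro i; by_cases hi : i = j <;> simp [hi]
        · simp
      have h1 : ∑ i, a i * (if i = j then (1:ℝ) else 0) ≤ ε := by
        rw [sum_one_pt]
        simp [ha j, hj]
        exact le_of_lt hε
      have h2 := h _ hb h1
      rw [sum_one_pt] at h2
      simpa using h2
    by_cases hall : ∀ j, c j ≤ ε
    · exact ⟨0, le_refl 0, fun j => by simpa using hall j⟩
    · push_neg at hall
      obtain ⟨jm, hjm⟩ := hall
      have hjmK : jm ∈ K := by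
        by_contra hc
        exact absurd (hout jm hc) (not_le.mpr hjm)
      have hε1 : ε < 1 := by
        by_contra hc
        push_neg at hc
        have hb : IsProbVec (fun i => if i = jm then (1:ℝ) else 0) := by
          constructor
          · intro i; by_cases hi : i = jm <;> simp [hi]
          · simp
        have h1 : ∑ i, a i * (if i = jm then (1:ℝ) else 0) ≤ ε := by
          rw [sum_one_pt]
          simp [ha jm, hjmK]
          exact hc
        have h2 := h _ hb h1
        rw [sum_one_pt] at h2
        simp at h2
        linarith
      obtain ⟨jK, hjKmem, hmax⟩ := K.exists_max_image c ⟨jm, hjmK⟩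
      set M := c jK with hM
      have hMε : ε < M := lt_of_lt_of_le hjm (hmax jm hjmK)
      have h1ε : (0:ℝ) < 1 - ε := by linarith
      refine ⟨(M - ε) / (1 - ε), div_nonneg (by linarith) (le_of_lt h1ε), ?_⟩
      intro j
      set z := (M - ε) / (1 - ε) with hz
      have hz1 : z * (1 - ε) = M - ε := div_mul_cancel₀ _ (ne_of_gt h1ε)
      by_cases hjK : j ∈ K
      · rw [ha j, if_pos hjK]
        have : c j ≤ M := hmax j hjK
        nlinarith
      · -- two-point test
        have hne : jK ≠ j := fun hcon => hjK (hcon ▸ hjKmem)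
        set b : Fin n → ℝ := fun i => if i = jK then ε else if i = j then 1 - ε else 0 with hbdef
        have hb : IsProbVec b := by
          constructor
          · intro i
            simp only [hbdef]
            split_ifs <;> linarith
          · have := sum_two_pt (fun _ : Fin n => (1:ℝ)) jK j hne ε (1 - ε)
            simp only [one_mul] at this
            simpa [hbdef] using this
        have hab : ∑ i, a i * b i ≤ ε := by
          rw [hbdef, sum_two_pt a jK j hne]
          rw [ha jK, if_pos hjKmem, ha j, if_neg hjK]
          ring_nf
          simp
        have hcb := h b hb hab
        rw [hbdef, sum_two_pt c jK j hne] at hcb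
        rw [ha j, if_neg hjK]
        -- hcb : M * ε + c j * (1 - ε) ≤ ε
        nlinarith
  · rintro ⟨z, hz, hc⟩ b ⟨hb0, hb1⟩ hab
    have step1 : ∑ j, c j * b j ≤ ∑ j, (ε * (1 - z) + z * a j) * b j :=
      Finset.sum_le_sum fun j _ => mul_le_mul_of_nonneg_right (hc j) (hb0 j)
    have step2 : ∑ j, (ε * (1 - z) + z * a j) * b j
        = ε * (1 - z) * (∑ j, b j) + z * ∑ j, a j * b j := by
      rw [Finset.mul_sum, Finset.mul_sum, ← Finset.sum_add_distrib]
      apply Finset.sum_congr rfl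
      intro j _
      ring
    rw [step2, hb1] at step1
    nlinarith
end
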